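/- If two states ρ and ρ' satisfy C(ρ') ⊄ C(ρ), then there exists ε > 0 such that for every n and every covariant operation Λ_n from n copies of ρ's system to the system of ρ', one has ‖Λ_n(ρ^{⊗n}) − ρ'‖₁ > ε. (Assuming as given the facts that covariant operations cannot create new modes of asymmetry, D(Λ(σ)) ⊆ D(σ), and that D(ρ^{⊗n}) ⊆ C(ρ).) -/

import Mathlib

open Matrix ComplexOrder

/-- Trace norm `‖A‖₁ = Tr √(AᴴA)`. -/
noncomputable def traceNorm {n : Type*} [Fintype n] [DecidableEq n]
    (A : Matrix n n ℂ) : ℝ :=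
  (((Matrix.posSemidef_conjTranspose_mul_self A).1.eigenvectorUnitary : Matrix n n ℂ) *
      Matrix.diagonal (fun i => ((Real.sqrt
        ((Matrix.posSemidef_conjTranspose_mul_self A).1.eigenvalues i) : ℝ) : ℂ)) *
      (star (Matrix.posSemidef_conjTranspose_mul_self A).1.eigenvectorUnitary : Matrix n n ℂ)).trace.re

/-- `ρ` is a density matrix. -/
def IsDensityMatrix {n : Type*} [Fintype n] (ρ : Matrix n n ℂ) : Prop :=
  ρ.PosSemidef ∧ ρ.trace = 1

/-- The `n`-fold tensor (Kronecker) power of a matrix, indexed by `Fin n → Fin d`. -/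
def tpow {d : ℕ} (A : Matrix (Fin d) (Fin d) ℂ) (n : ℕ) :
    Matrix (Fin n → Fin d) (Fin n → Fin d) ℂ :=
  Matrix.of fun f g => ∏ i, A (f i) (g i)

/-- Time-evolution conjugation `X ↦ e^{-iHt} X e^{iHt}` for `H = diag(E)`. -/
noncomputable def timeConj {I : Type*} [Fintype I] [DecidableEq I] (E : I → ℝ) (t : ℝ)
    (X : Matrix I I ℂ) : Matrix I I ℂ :=
  NormedSpace.exp ((-(Complex.I * t)) • Matrix.diagonal fun k => (E k : ℂ)) * X *
    NormedSpace.exp ((Complex.I * t) • Matrix.diagonal fun k => (E k : ℂ))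

/-- The set of resonant coherent modes of a state `ρ`:
all integer linear combinations `Σ n_{ij}(E_i − E_j)` over pairs with `ρ_{ij} ≠ 0`. -/
def resonantModes {I : Type*} [Fintype I] (E : I → ℝ) (ρ : Matrix I I ℂ) : Set ℝ :=
  {x | ∃ n : I → I → ℤ, (∀ i j, ρ i j = 0 → n i j = 0) ∧
        x = ∑ i, ∑ j, (n i j : ℝ) * (E i - E j)}

lemma psd_quad {n : Type*} [Fintype n] [DecidableEq n] {P : Matrix n n ℂ}
    (hP : P.PosSemidef) (j k : n) (t : ℝ) (c : ℂ) :
    0 ≤ (t:ℂ)*t*(P j j) + t*c*(P j k) + (starRingEnd ℂ c)*t*(P k j)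
        + (starRingEnd ℂ c)*c*(P k k) := by
  have h := hP.dotProduct_mulVec_nonneg ((t:ℂ) • (Pi.single j 1 : n → ℂ) + c • (Pi.single k 1 : n → ℂ))
  have hx : star ((t:ℂ) • (Pi.single j 1 : n → ℂ) + c • (Pi.single k 1 : n → ℂ))
      = (t:ℂ) • (Pi.single j 1 : n → ℂ) + (starRingEnd ℂ c) • (Pi.single k 1 : n → ℂ) := by
    ext a
    rcases eq_or_ne a j with rfl | haj <;> rcases eq_or_ne a k with rfl | hak <;>
      simp_all [Pi.single_apply, Complex.conj_ofReal]
  rw [hx] at h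
  rw [Matrix.mulVec_add, Matrix.mulVec_smul, Matrix.mulVec_smul] at h
  rw [add_dotProduct, smul_dotProduct, smul_dotProduct,
    dotProduct_add, dotProduct_add, dotProduct_smul,
    dotProduct_smul, dotProduct_smul, dotProduct_smul] at h
  simp only [Matrix.mulVec_single_one, single_dotProduct, Matrix.col_apply, one_mul, mul_one, smul_eq_mul] at h
  convert h using 1
  ring

lemma psd_diag_re_nonneg {n : Type*} [Fintype n] [DecidableEq n] {P : Matrix n n ℂ}
    (hP : P.PosSemidef) (j : n) : 0 ≤ (P j j).re ∧ (P j j).im = 0 := by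
  have h := psd_quad hP j j 1 0
  rw [Complex.le_def] at h
  constructor
  · simpa using h.1
  · simpa using h.2.symm

lemma psd_offdiag_sq {n : Type*} [Fintype n] [DecidableEq n] {P : Matrix n n ℂ}
    (hP : P.PosSemidef) (j k : n) :
    ‖P j k‖ ^ 2 ≤ (P j j).re * (P k k).re := by
  set p := P j k with hp
  rcases eq_or_ne p 0 with h0 | h0
  · rw [h0]
    simpa using mul_nonneg (psd_diag_re_nonneg hP j).1 (psd_diag_re_nonneg hP k).1
  · have habs : (0:ℝ) < ‖p‖ := norm_pos_iff.mpr h0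
    set c : ℂ := -(starRingEnd ℂ p) / (‖p‖ : ℂ) with hc
    have hkj : P k j = starRingEnd ℂ p := by
      have h1 : Pᴴ k j = P k j := by rw [hP.1]
      rw [← h1, Matrix.conjTranspose_apply, hp]
      rfl
    have hr0 : ((‖p‖ : ℝ) : ℂ) ≠ 0 := by exact_mod_cast habs.ne'
    have hcp : c * p = -((‖p‖ : ℝ) : ℂ) := by
      rw [hc]
      field_simp
      rw [mul_comm, Complex.mul_conj, Complex.normSq_eq_norm_sq]
      push_cast
      ring
    have hccp : (starRingEnd ℂ c) * (starRingEnd ℂ p) = -((‖p‖ : ℝ) : ℂ) := by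
      rw [← RingHom.map_mul, hcp]
      simp [Complex.conj_ofReal]
    have hcc1 : (starRingEnd ℂ c) * c = 1 := by
      have habsc : ‖c‖ = 1 := by
        rw [hc]
        rw [norm_div]
        simp [Complex.norm_conj, habs.ne', Complex.norm_real, abs_of_pos habs,
          div_self habs.ne']
      calc (starRingEnd ℂ c) * c = (Complex.normSq c : ℂ) := by
              rw [mul_comm, Complex.mul_conj]
        _ = 1 := by rw [Complex.normSq_eq_norm_sq, habsc]; norm_num
    have key : ∀ t : ℝ, 0 ≤ (P j j).re * (t * t) + (-(2 * ‖p‖)) * t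
        + (P k k).re := by
      intro t
      have h := psd_quad hP j k t c
      have him_j : ((P j j).re : ℂ) = P j j := by
        rw [Complex.ext_iff]
        simp [(psd_diag_re_nonneg hP j).2]
      have him_k : ((P k k).re : ℂ) = P k k := by
        rw [Complex.ext_iff]
        simp [(psd_diag_re_nonneg hP k).2]
      have heq : (t:ℂ)*t*(P j j) + t*c*(P j k) + (starRingEnd ℂ c)*t*(P k j)
          + (starRingEnd ℂ c)*c*(P k k)
          = (((P j j).re * (t * t) + (-(2 * ‖p‖)) * t + (P k k).re : ℝ) : ℂ) := by
        rw [← hp, hkj]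
        push_cast
        rw [him_j, him_k]
        linear_combination (t:ℂ) * hcp + (t:ℂ) * hccp + (P k k) * hcc1
      rw [heq, Complex.le_def] at h
      simpa using h.1
    have hd := discrim_le_zero key
    rw [discrim] at hd
    nlinarith [habs]

lemma abs_apply_le_traceNorm {n : Type*} [Fintype n] [DecidableEq n]
    (A : Matrix n n ℂ) (i j : n) : ‖A i j‖ ≤ traceNorm A := by
  set hpsd := Matrix.posSemidef_conjTranspose_mul_self A with hpsd_def
  set P := ((hpsd.1.eigenvectorUnitary : Matrix n n ℂ) *
      Matrix.diagonal (fun i => ((Real.sqrt (hpsd.1.eigenvalues i) : ℝ) : ℂ)) *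
      (star hpsd.1.eigenvectorUnitary : Matrix n n ℂ)) with hPdef
  have hP : P.PosSemidef := by
    have hD : (Matrix.diagonal
        (fun i => ((Real.sqrt (hpsd.1.eigenvalues i) : ℝ) : ℂ))).PosSemidef :=
      Matrix.posSemidef_diagonal_iff.mpr fun i => Complex.zero_le_real.mpr (Real.sqrt_nonneg _)
    exact hD.mul_mul_conjTranspose_same _
  have hsq : P * P = Aᴴ * A := by
    have hU := Unitary.coe_star_mul_self hpsd.1.eigenvectorUnitary
    refine Eq.trans ?_ (hpsd.1.spectral_theorem).symm
    rw [Unitary.conjStarAlgAut_apply, hPdef]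
    simp only [mul_assoc]
    rw [← mul_assoc (star hpsd.1.eigenvectorUnitary : Matrix n n ℂ)
      (hpsd.1.eigenvectorUnitary : Matrix n n ℂ), hU, one_mul, ← mul_assoc (Matrix.diagonal _),
      Matrix.diagonal_mul_diagonal]
    congr 3
    funext i
    rw [Function.comp_apply, ← Complex.ofReal_mul, Real.mul_self_sqrt (hpsd.eigenvalues_nonneg i)]
    rfl
  have hT : traceNorm A = ∑ a, (P a a).re := by
    rw [traceNorm, Matrix.trace, Complex.re_sum]
    rfl
  have hTnn : 0 ≤ traceNorm A := by
    rw [hT]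
    exact Finset.sum_nonneg fun a _ => (psd_diag_re_nonneg hP a).1
  -- step 1
  have h1 : ‖A i j‖ ^ 2 ≤ ((Aᴴ * A) j j).re := by
    have : ((Aᴴ * A) j j).re = ∑ k, ‖A k j‖ ^ 2 := by
      rw [Matrix.mul_apply, Complex.re_sum]
      refine Finset.sum_congr rfl fun k _ => ?_
      rw [Matrix.conjTranspose_apply]
      rw [show (star (A k j) : ℂ) = starRingEnd ℂ (A k j) from rfl]
      rw [mul_comm, Complex.mul_conj, Complex.normSq_eq_norm_sq]
      norm_cast
    rw [this]
    exact Finset.single_le_sum (fun k _ => sq_nonneg (‖A k j‖)) (Finset.mem_univ i)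
  -- step 2
  have h2 : ((Aᴴ * A) j j).re = ∑ k, ‖P j k‖ ^ 2 := by
    rw [← hsq, Matrix.mul_apply, Complex.re_sum]
    refine Finset.sum_congr rfl fun k _ => ?_
    have hkj : P k j = starRingEnd ℂ (P j k) := by
      have h1' : Pᴴ k j = P k j := by rw [hP.1]
      rw [← h1', Matrix.conjTranspose_apply]
      rfl
    rw [hkj, Complex.mul_conj, Complex.normSq_eq_norm_sq]
    norm_cast
  -- step 3
  have h3 : ∑ k, ‖P j k‖ ^ 2 ≤ (P j j).re * traceNorm A := by
    rw [hT, Finset.mul_sum]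
    exact Finset.sum_le_sum fun k _ => psd_offdiag_sq hP j k
  have h4 : (P j j).re ≤ traceNorm A := by
    rw [hT]
    exact Finset.single_le_sum (fun a _ => (psd_diag_re_nonneg hP a).1) (Finset.mem_univ j)
  nlinarith [norm_nonneg (A i j)]

noncomputable def expChar (μ : ℝ) : Multiplicative ℝ →* ℂ where
  toFun t := Complex.exp (-(Complex.I * (Multiplicative.toAdd t : ℝ) * μ))
  map_one' := by simp
  map_mul' x y := by
    show Complex.exp (-(Complex.I * (Multiplicative.toAdd (x * y) : ℝ) * μ)) = _
    rw [toAdd_mul, ← Complex.exp_add]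
    congr 1
    push_cast
    ring

lemma expChar_injective : Function.Injective expChar := by
  intro a b hab
  by_contra hne
  have hsub : a - b ≠ 0 := sub_ne_zero.mpr hne
  have h := DFunLike.congr_fun hab (Multiplicative.ofAdd (Real.pi / (a - b)))
  simp only [expChar, MonoidHom.coe_mk, OneHom.coe_mk, toAdd_ofAdd] at h
  rw [Complex.exp_eq_exp_iff_exists_int] at h
  obtain ⟨k, hk⟩ := h
  have hπ : Real.pi ≠ 0 := Real.pi_ne_zero
  have hk' : -((Real.pi/(a-b))*a) = -((Real.pi/(a-b))*b) + k*(2*Real.pi) := by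
    have him := congrArg Complex.im hk
    simpa [← Complex.ofReal_sub, ← Complex.ofReal_div] using him
  have hdiv : (Real.pi/(a-b))*a - (Real.pi/(a-b))*b = Real.pi := by
    rw [← mul_sub]
    exact div_mul_cancel₀ _ hsub
  have hzero : ((2*k+1 : ℤ) : ℝ) * Real.pi = 0 := by push_cast; linarith
  have : ((2*k+1 : ℤ) : ℝ) = 0 := by
    rcases mul_eq_zero.mp hzero with h | h
    · exact h
    · exact absurd h hπ
  have : (2*k+1 : ℤ) = 0 := by exact_mod_cast this
  omega

lemma exists_resonant_term {ι : Type*} [Fintype ι] (ω : ι → ℝ) (c : ι → ℂ) (ω' : ℝ) (s : ℂ)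
    (hs : s ≠ 0)
    (h : ∀ t : ℝ, ∑ i, c i * Complex.exp (-(Complex.I * t * ω i))
        = Complex.exp (-(Complex.I * t * ω')) * s) :
    ∃ i, c i ≠ 0 ∧ ω i = ω' := by
  classical
  by_contra hno
  push_neg at hno
  set F : Finset ℝ := insert ω' (Finset.image ω Finset.univ) with hF
  set g : ℝ → ℂ := fun μ => (∑ i ∈ Finset.univ.filter (fun i => ω i = μ), c i)
      - (if μ = ω' then s else 0) with hg
  have hcomb : ∑ μ ∈ F, g μ • ((fun ν => ((expChar ν : Multiplicative ℝ →* ℂ)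
      : Multiplicative ℝ → ℂ)) μ) = 0 := by
    funext t
    simp only [Finset.sum_apply, Pi.smul_apply, smul_eq_mul, Pi.zero_apply]
    have he : ∀ μ : ℝ, (expChar μ : Multiplicative ℝ → ℂ) t
        = Complex.exp (-(Complex.I * (Multiplicative.toAdd t : ℝ) * μ)) := fun μ => rfl
    simp only [he, hg, sub_mul, Finset.sum_sub_distrib]
    have hfirst : ∑ μ ∈ F, (∑ i ∈ Finset.univ.filter (fun i => ω i = μ), c i)
        * Complex.exp (-(Complex.I * (Multiplicative.toAdd t : ℝ) * μ))
        = ∑ i, c i * Complex.exp (-(Complex.I * (Multiplicative.toAdd t : ℝ) * ω i)) := by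
      rw [← Finset.sum_fiberwise_of_maps_to (g := ω)
        (t := F) (fun i _ => by simp [hF]) (fun i => c i * Complex.exp
          (-(Complex.I * (Multiplicative.toAdd t : ℝ) * ω i)))]
      refine Finset.sum_congr rfl fun μ _ => ?_
      rw [Finset.sum_mul]
      refine Finset.sum_congr rfl fun i hi => ?_
      rw [(Finset.mem_filter.mp hi).2]
    have hsecond : ∑ μ ∈ F, (if μ = ω' then s else 0)
        * Complex.exp (-(Complex.I * (Multiplicative.toAdd t : ℝ) * μ))
        = Complex.exp (-(Complex.I * (Multiplicative.toAdd t : ℝ) * ω')) * s := by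
      simp only [ite_mul, zero_mul]
      rw [Finset.sum_ite_eq' F ω'
        (fun μ => s * Complex.exp (-(Complex.I * (Multiplicative.toAdd t : ℝ) * μ)))]
      simp only [hF]
      rw [if_pos (Finset.mem_insert_self _ _)]
      ring
    rw [hfirst, hsecond, h (Multiplicative.toAdd t)]
    ring
  have li : LinearIndependent ℂ (fun ν : ℝ => ((expChar ν : Multiplicative ℝ →* ℂ)
      : Multiplicative ℝ → ℂ)) :=
    (linearIndependent_monoidHom (Multiplicative ℝ) ℂ).comp expChar expChar_injective
  have hzero := linearIndependent_iff'.mp li F g hcomb ω' (by simp [hF])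
  rw [hg] at hzero
  simp only [if_pos rfl] at hzero
  have hsum : ∑ i ∈ Finset.univ.filter (fun i => ω i = ω'), c i = 0 := by
    refine Finset.sum_eq_zero fun i hi => ?_
    have := (Finset.mem_filter.mp hi).2
    by_contra hci
    exact hno i hci this
  rw [hsum] at hzero
  simp at hzero
  exact hs hzero

lemma timeConj_apply {I : Type*} [Fintype I] [DecidableEq I] (E : I → ℝ) (t : ℝ)
    (X : Matrix I I ℂ) (i j : I) :
    timeConj E t X i j
      = Complex.exp (-(Complex.I * t * E i)) * X i j * Complex.exp (Complex.I * t * E j) := by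
  rw [timeConj]
  rw [← Matrix.diagonal_smul, ← Matrix.diagonal_smul, Matrix.exp_diagonal, Matrix.exp_diagonal]
  rw [Matrix.mul_diagonal, Matrix.diagonal_mul]
  rw [Pi.coe_exp, Pi.coe_exp]
  simp only [Pi.smul_apply, smul_eq_mul, ← Complex.exp_eq_exp_ℂ]
  congr 2
  ring

lemma lmap_entry {m n' : Type*} [Fintype m] [DecidableEq m] [Fintype n'] [DecidableEq n']
    (Λ : Matrix m m ℂ →ₗ[ℂ] Matrix n' n' ℂ) (M : Matrix m m ℂ) (i j : n') :
    Λ M i j = ∑ f, ∑ g, M f g * (Λ (Matrix.single f g 1) i j) := by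
  conv_lhs => rw [Matrix.matrix_eq_sum_single M]
  rw [map_sum, Matrix.sum_apply]
  refine Finset.sum_congr rfl fun f _ => ?_
  rw [map_sum, Matrix.sum_apply]
  refine Finset.sum_congr rfl fun g _ => ?_
  have : Matrix.single f g (M f g) = (M f g) • Matrix.single f g 1 := by
    rw [Matrix.smul_single, smul_eq_mul, mul_one]
  rw [this, LinearMap.map_smul, Matrix.smul_apply, smul_eq_mul]

lemma mode_transfer {A B : Type*} [Fintype A] [DecidableEq A] [Fintype B] [DecidableEq B]
    (EA : A → ℝ) (EB : B → ℝ) (Λ : Matrix A A ℂ →ₗ[ℂ] Matrix B B ℂ)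
    (hcov : ∀ (t : ℝ) (X : Matrix A A ℂ), Λ (timeConj EA t X) = timeConj EB t (Λ X))
    (σ : Matrix A A ℂ) (i j : B) (hne : Λ σ i j ≠ 0) :
    ∃ f g : A, σ f g ≠ 0 ∧ EA f - EA g = EB i - EB j := by
  have key := exists_resonant_term (ι := A × A)
    (fun p => EA p.1 - EA p.2)
    (fun p => σ p.1 p.2 * (Λ (Matrix.single p.1 p.2 1) i j))
    (EB i - EB j) (Λ σ i j) hne ?_
  · obtain ⟨⟨f, g⟩, hc, hω⟩ := key
    exact ⟨f, g, left_ne_zero_of_mul hc, hω⟩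
  · intro t
    have h := congrFun (congrFun (hcov t σ) i) j
    rw [timeConj_apply] at h
    rw [lmap_entry] at h
    beta_reduce
    calc ∑ p : A × A, (σ p.1 p.2 * (Λ (Matrix.single p.1 p.2 1) i j))
          * Complex.exp (-(Complex.I * t * ((EA p.1 - EA p.2 : ℝ) : ℂ)))
        = ∑ f, ∑ g, (timeConj EA t σ) f g * (Λ (Matrix.single f g 1) i j) := by
          rw [Fintype.sum_prod_type]
          refine Finset.sum_congr rfl fun f _ => Finset.sum_congr rfl fun g _ => ?_
          rw [timeConj_apply]
          rw [show (-(Complex.I * t * ((EA f - EA g : ℝ) : ℂ)) : ℂ)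
            = -(Complex.I * t * EA f) + (Complex.I * t * EA g) by push_cast; ring]
          rw [Complex.exp_add]
          ring
      _ = Complex.exp (-(Complex.I * t * EB i)) * (Λ σ i j)
            * Complex.exp (Complex.I * t * EB j) := h
      _ = Complex.exp (-(Complex.I * t * ((EB i - EB j : ℝ) : ℂ))) * (Λ σ i j) := by
          rw [show (-(Complex.I * t * ((EB i - EB j : ℝ) : ℂ)) : ℂ)
            = -(Complex.I * t * EB i) + (Complex.I * t * EB j) by push_cast; ring]
          rw [Complex.exp_add]
          ring

lemma tpow_mode {d : ℕ} (E : Fin d → ℝ) (ρ : Matrix (Fin d) (Fin d) ℂ) (n : ℕ)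
    (f g : Fin n → Fin d) (h : tpow ρ n f g ≠ 0) :
    (∑ k, E (f k)) - (∑ k, E (g k)) ∈ resonantModes E ρ := by
  classical
  have hfac : ∀ k : Fin n, ρ (f k) (g k) ≠ 0 := by
    intro k
    exact Finset.prod_ne_zero_iff.mp (show (∏ k, ρ (f k) (g k)) ≠ 0 from h) k
      (Finset.mem_univ k)
  refine ⟨fun a b => ((Finset.univ.filter (fun k => (f k, g k) = (a, b))).card : ℤ), ?_, ?_⟩
  · intro a b hab
    simp only [Int.natCast_eq_zero, Finset.card_eq_zero, Finset.filter_eq_empty_iff]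
    intro k _
    intro hk
    rw [Prod.mk.injEq] at hk
    exact hfac k (hk.1 ▸ hk.2 ▸ hab)
  · have h1 : (∑ k, E (f k)) - (∑ k, E (g k)) = ∑ k, (E (f k) - E (g k)) := by
      rw [Finset.sum_sub_distrib]
    rw [h1]
    rw [← Finset.sum_fiberwise Finset.univ (fun k => (f k, g k))
      (fun k => E (f k) - E (g k))]
    rw [Fintype.sum_prod_type]
    refine Finset.sum_congr rfl fun a _ => Finset.sum_congr rfl fun b _ => ?_
    rw [show ∑ k ∈ Finset.univ.filter (fun k => (f k, g k) = (a, b)), (E (f k) - E (g k))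
        = ∑ k ∈ Finset.univ.filter (fun k => (f k, g k) = (a, b)), (E a - E b) from
      Finset.sum_congr rfl fun k hk => by
        have := (Finset.mem_filter.mp hk).2
        rw [Prod.mk.injEq] at this
        rw [this.1, this.2]]
    rw [Finset.sum_const, nsmul_eq_mul]
    push_cast
    ring

/-- If `C(ρ') ⊄ C(ρ)`, then there is an `ε > 0` such that no covariant operation on any
number of copies of `ρ` can prepare `ρ'` within trace distance `ε`. -/
theorem no_approx_preparation_of_unreachable_modes {d d' : ℕ}
    (E : Fin d → ℝ) (E' : Fin d' → ℝ)
    (ρ : Matrix (Fin d) (Fin d) ℂ) (ρ' : Matrix (Fin d') (Fin d') ℂ)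
    (hρ : IsDensityMatrix ρ) (hρ' : IsDensityMatrix ρ')
    (hC : ¬ resonantModes E' ρ' ⊆ resonantModes E ρ) :
    ∃ ε > 0, ∀ (n : ℕ)
      (Λ : Matrix (Fin n → Fin d) (Fin n → Fin d) ℂ →ₗ[ℂ] Matrix (Fin d') (Fin d') ℂ),
      (∀ (t : ℝ) (X : Matrix (Fin n → Fin d) (Fin n → Fin d) ℂ),
        Λ (timeConj (fun f : Fin n → Fin d => ∑ i, E (f i)) t X)
          = timeConj E' t (Λ X)) →
      traceNorm (Λ (tpow ρ n) - ρ') > ε := by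
  classical
  obtain ⟨x, hx, hxnot⟩ := Set.not_subset.mp hC
  obtain ⟨m, hmsupp, hxeq⟩ := hx
  set S : Finset (Fin d' × Fin d') := Finset.univ.filter (fun p => m p.1 p.2 ≠ 0) with hS
  have hSne : S.Nonempty := by
    by_contra hSe
    rw [Finset.not_nonempty_iff_eq_empty] at hSe
    have hm0 : ∀ i j, m i j = 0 := by
      intro i j
      by_contra hm
      have hmem : (i, j) ∈ S := by simp [hS, hm]
      rw [hSe] at hmem
      exact absurd hmem (Finset.notMem_empty _)
    have hx0 : x = 0 := by
      rw [hxeq]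
      simp [hm0]
    exact hxnot ⟨fun _ _ => 0, fun _ _ _ => rfl, by rw [hx0]; simp⟩
  have hρ'ne : ∀ p ∈ S, ρ' p.1 p.2 ≠ 0 := by
    intro p hp hzero
    have h1 := hmsupp p.1 p.2 hzero
    rw [hS, Finset.mem_filter] at hp
    exact hp.2 h1
  set ε : ℝ := (S.inf' hSne fun p => ‖ρ' p.1 p.2‖) / 2 with hε
  have hεpos : 0 < ε := by
    rw [hε]
    apply div_pos _ two_pos
    rw [Finset.lt_inf'_iff]
    intro p hp
    exact norm_pos_iff.mpr (hρ'ne p hp)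
  refine ⟨ε, hεpos, ?_⟩
  intro n Λ hcov
  by_contra hle
  push_neg at hle
  have hclose : ∀ p ∈ S, Λ (tpow ρ n) p.1 p.2 ≠ 0 := by
    intro p hp h0
    have hb := abs_apply_le_traceNorm (Λ (tpow ρ n) - ρ') p.1 p.2
    rw [Matrix.sub_apply, h0, zero_sub, norm_neg] at hb
    have hinf : S.inf' hSne (fun q => ‖ρ' q.1 q.2‖) ≤ ‖ρ' p.1 p.2‖ :=
      Finset.inf'_le _ hp
    have habs := norm_pos_iff.mpr (hρ'ne p hp)
    rw [hε] at hle
    linarith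
  have hmode : ∀ p ∈ S, E' p.1 - E' p.2 ∈ resonantModes E ρ := by
    intro p hp
    obtain ⟨f, g, hσ, heq⟩ := mode_transfer (fun f : Fin n → Fin d => ∑ i, E (f i)) E' Λ hcov
      (tpow ρ n) p.1 p.2 (hclose p hp)
    rw [← heq]
    exact tpow_mode E ρ n f g hσ
  have hmode' : ∀ i j : Fin d', ∃ N : Fin d → Fin d → ℤ,
      (∀ a b, ρ a b = 0 → N a b = 0) ∧
      ((i, j) ∈ S → E' i - E' j = ∑ a, ∑ b, (N a b : ℝ) * (E a - E b)) := by
    intro i j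
    by_cases hij : (i, j) ∈ S
    · obtain ⟨N, h1, h2⟩ := hmode (i, j) hij
      exact ⟨N, h1, fun _ => h2⟩
    · exact ⟨fun _ _ => 0, fun _ _ _ => rfl, fun h => absurd h hij⟩
  choose N hN1 hN2 using hmode'
  refine hxnot ⟨fun a b => ∑ i, ∑ j, m i j * N i j a b, ?_, ?_⟩
  · intro a b hab
    refine Finset.sum_eq_zero fun i _ => Finset.sum_eq_zero fun j _ => ?_
    rw [hN1 i j a b hab, mul_zero]
  · rw [hxeq]
    symm
    push_cast
    simp only [Finset.sum_mul]
    calc ∑ a, ∑ b, ∑ i, ∑ j, (m i j : ℝ) * (N i j a b : ℝ) * (E a - E b)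
        = ∑ a, ∑ i, ∑ b, ∑ j, (m i j : ℝ) * (N i j a b : ℝ) * (E a - E b) :=
          Finset.sum_congr rfl fun a _ => Finset.sum_comm
      _ = ∑ i, ∑ a, ∑ b, ∑ j, (m i j : ℝ) * (N i j a b : ℝ) * (E a - E b) :=
          Finset.sum_comm
      _ = ∑ i, ∑ a, ∑ j, ∑ b, (m i j : ℝ) * (N i j a b : ℝ) * (E a - E b) :=
          Finset.sum_congr rfl fun i _ => Finset.sum_congr rfl fun a _ =>
            Finset.sum_comm
      _ = ∑ i, ∑ j, ∑ a, ∑ b, (m i j : ℝ) * (N i j a b : ℝ) * (E a - E b) :=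
          Finset.sum_congr rfl fun i _ => Finset.sum_comm
      _ = ∑ i, ∑ j, (m i j : ℝ) * (E' i - E' j) := by
          refine Finset.sum_congr rfl fun i _ => Finset.sum_congr rfl fun j _ => ?_
          by_cases hij : m i j = 0
          · simp [hij]
          · have hmem : (i, j) ∈ S := by simp [hS, hij]
            rw [hN2 i j hmem]
            simp [Finset.mul_sum, mul_assoc]
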